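/- arXiv:2001.02017 — 3 statements merged into one kernel-verified Lean document; each statement's English description precedes it below -/
import Mathlib

section
/- Let N be a fully reachable k-pair network with a fixed choice of paths P_{s_i,t_j} (1 ≤ i,j ≤ k), and let f_{i,j} : A → ℝ be the unit flow of P_{s_i,t_j} (equal to 1 on the arcs of P_{s_i,t_j} and 0 elsewhere). Given real coefficients c^{(l)}_{i,j} (1 ≤ i,j,l ≤ k), define f_l := Σ_{i,j=1}^k c^{(l)}_{i,j} f_{i,j}. Then (f_1,…,f_k) is an (s_1,…,s_k)–(t_1,…,t_k) multi-flow of rate (1,1,…,1) if and only if for every l: Σ_{j=1}^k c^{(l)}_{i,j} = 0 for all i ≠ l; Σ_{i=1}^k c^{(l)}_{i,j} = 0 for all j ≠ l; and Σ_{i=1}^k Σ_{j=1}^k c^{(l)}_{i,j} = 1. -/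
/-!
Excess is linear in the flow, and the unit flow of a path from `u` to `v` has excess
`[v = w] - [u = w]` at `w`: its arcs are distinct by acyclicity, so the sum telescopes along
the path. Hence the excess of `f_l` is the `j`-th column sum of `c^{(l)}` at `t_j`, minus the
`i`-th row sum at `s_i`, and zero elsewhere; no sink is a source because sinks have no outgoing
arcs.
-/

open scoped BigOperators

/-- A `k`-pair network: a finite DAG with `k` sources of in-degree 0 and
`k` sinks of out-degree 0. -/
structure KPairNetwork (k : ℕ) where
  V : Type
  A : Type
  [fintypeV : Fintype V]
  [fintypeA : Fintype A]
  [decEqV : DecidableEq V]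
  [decEqA : DecidableEq A]
  tail : A → V
  head : A → V
  /-- acyclicity, via a topological ordering of the vertices -/
  acyclic : ∃ ord : V → ℕ, ∀ a : A, ord (tail a) < ord (head a)
  src : Fin k → V
  snk : Fin k → V
  src_inj : Function.Injective src
  snk_inj : Function.Injective snk
  src_no_in : ∀ (i : Fin k) (a : A), head a ≠ src i
  snk_no_out : ∀ (i : Fin k) (a : A), tail a ≠ snk i

attribute [instance] KPairNetwork.fintypeV KPairNetwork.fintypeA
attribute [instance] KPairNetwork.decEqV KPairNetwork.decEqA

namespace KPairNetwork

variable {k : ℕ} (N : KPairNetwork k)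

/-- `l` is (the list of arcs of) a directed path from `u` to `v`. -/
def IsPathFrom (u v : N.V) (l : List N.A) : Prop :=
  l ≠ [] ∧ l.Chain' (fun a b => N.head a = N.tail b) ∧
    (∀ a ∈ l.head?, N.tail a = u) ∧ (∀ a ∈ l.getLast?, N.head a = v)

/-- The vertices lying on a (nonempty) list of arcs. -/
def pathVerts (l : List N.A) : Set N.V :=
  {v | ∃ a ∈ l, v = N.tail a ∨ v = N.head a}

/-- `P i j` is a path from `s i` to `t j`, and for each sink `j` the `k`
paths `P · j` are pairwise arc-disjoint (strong reachability). -/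
def IsStrongSystem (P : Fin k → Fin k → List N.A) : Prop :=
  (∀ i j, N.IsPathFrom (N.src i) (N.snk j) (P i j)) ∧
    ∀ (j i i' : Fin k), i ≠ i' → ∀ a : N.A, a ∈ P i j → a ∉ P i' j

/-- Extra strong reachability: in addition, for each sink `j`, two distinct
paths towards `t j` share no vertex other than `t j`. -/
def IsExtraStrongSystem (P : Fin k → Fin k → List N.A) : Prop :=
  N.IsStrongSystem P ∧
    ∀ (j i i' : Fin k), i ≠ i' →
      ∀ v : N.V, v ∈ N.pathVerts (P i j) → v ∈ N.pathVerts (P i' j) → v = N.snk j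

/-- Stability: the choice of the `k` pairwise arc-disjoint paths towards each
sink is unique. -/
def IsStableSystem (P : Fin k → Fin k → List N.A) : Prop :=
  N.IsStrongSystem P ∧
    ∀ (j : Fin k) (Q : Fin k → List N.A),
      (∀ i, N.IsPathFrom (N.src i) (N.snk j) (Q i)) →
      (∀ i i', i ≠ i' → ∀ a : N.A, a ∈ Q i → a ∉ Q i') →
      ∀ i, Q i = P i j

/-- `excess_f(v) = Σ_{head a = v} f a − Σ_{tail a = v} f a`. -/
noncomputable def excess (f : N.A → ℝ) (v : N.V) : ℝ :=
  (∑ a : N.A, if N.head a = v then f a else 0) -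
    (∑ a : N.A, if N.tail a = v then f a else 0)

/-- An `u`–`v` flow: zero excess away from `u` and `v`. -/
def IsFlow (u v : N.V) (f : N.A → ℝ) : Prop :=
  ∀ w : N.V, w ≠ u → w ≠ v → N.excess f w = 0

/-- The unit flow along a path: `1` on its arcs and `0` elsewhere. -/
noncomputable def unitFlow (l : List N.A) : N.A → ℝ :=
  fun a => if a ∈ l then 1 else 0

/-- The set of source/sink index pairs whose path passes through the arc `a`. -/
def arcPattern (P : Fin k → Fin k → List N.A) (a : N.A) : Finset (Fin k × Fin k) :=
  Finset.univ.filter (fun q => a ∈ P q.1 q.2)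

/-- `S_N`, the family of index-pair patterns of the arcs of `N`. -/
def SN (P : Fin k → Fin k → List N.A) : Set (Finset (Fin k × Fin k)) :=
  {T | ∃ a : N.A, T = N.arcPattern P a}

/-! ### Segments and longest common segments -/

/-- A segment: a start vertex together with a (possibly empty) chained list of
arcs starting there.  A segment with no arcs is a single vertex. -/
def IsSeg (s : N.V × List N.A) : Prop :=
  s.2.Chain' (fun a b => N.head a = N.tail b) ∧ ∀ a ∈ s.2.head?, N.tail a = s.1

/-- The vertices of a segment. -/
def segVerts (s : N.V × List N.A) : Set N.V :=
  insert s.1 (N.pathVerts s.2)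

/-- The final vertex of a segment. -/
def segEnd (s : N.V × List N.A) : N.V :=
  s.2.getLast?.elim s.1 N.head

/-- The segment `s` lies on the path `p`. -/
def SegOn (s : N.V × List N.A) (p : List N.A) : Prop :=
  s.2 <:+: p ∧ s.1 ∈ N.pathVerts p

/-- The segment `s` is contained in the segment `s'`. -/
def SegLE (s s' : N.V × List N.A) : Prop :=
  s.2 <:+: s'.2 ∧ s.1 ∈ N.segVerts s'

/-- `s` is a longest common segment (l.c.s.) of the set of paths `ps`:
it is a segment common to all paths of `ps`, and no segment properly
containing it is common to all paths of `ps`. -/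
def IsLCS (ps : Set (List N.A)) (s : N.V × List N.A) : Prop :=
  N.IsSeg s ∧ (∀ p ∈ ps, N.SegOn s p) ∧
    ∀ s' : N.V × List N.A, N.IsSeg s' → N.SegLE s s' → s' ≠ s →
      ∃ p ∈ ps, ¬ N.SegOn s' p

/-- `s` is an l.c.s. of some pair `{P i j₁, P i' j₂}` and lies on `p`. -/
def IsPairLCSOn (P : Fin k → Fin k → List N.A) (j₁ j₂ : Fin k)
    (p : List N.A) (s : N.V × List N.A) : Prop :=
  (∃ i i' : Fin k, N.IsLCS {P i j₁, P i' j₂} s) ∧ N.SegOn s p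

/-- `ℓ^{j₁,j₂}(p)`: the number of l.c.s.'s of pairs `{P i j₁, P i' j₂}` lying
on the path `p`. -/
noncomputable def lcsCount (P : Fin k → Fin k → List N.A) (j₁ j₂ : Fin k)
    (p : List N.A) : ℕ :=
  Nat.card {s : N.V × List N.A | N.IsPairLCSOn P j₁ j₂ p s}

/-- `m_{j₁,j₂}^c = {i : ℓ^{j₁,j₂}(P_{s_i,t_c}) = 1}`. -/
def mset (P : Fin k → Fin k → List N.A) (j₁ j₂ c : Fin k) : Set (Fin k) :=
  {i | N.lcsCount P j₁ j₂ (P i c) = 1}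

/-- `u` lies strictly before `v` along the path `p` (there is a nonempty
infix of `p` going from `u` to `v`). -/
def StrictlyBeforeOn (p : List N.A) (u v : N.V) : Prop :=
  ∃ l : List N.A, l <:+: p ∧ l.head?.map N.tail = some u ∧ l.getLast?.map N.head = some v

/-- `e 0, …, e (L-1)` enumerates, in the order along `p`, the l.c.s.'s
`p(1) < p(2) < ⋯ < p(L)` of pairs `{P i j₁, P i' j₂}` lying on `p`. -/
def IsLCSEnum (P : Fin k → Fin k → List N.A) (j₁ j₂ : Fin k) (p : List N.A)
    (e : ℕ → N.V × List N.A) (L : ℕ) : Prop :=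
  (∀ n, n < L → N.IsPairLCSOn P j₁ j₂ p (e n)) ∧
  (∀ s, N.IsPairLCSOn P j₁ j₂ p s → ∃ n, n < L ∧ e n = s) ∧
  (∀ m n, m < n → n < L → N.StrictlyBeforeOn p (N.segEnd (e m)) (e n).1)

/-! ### Residual networks, regular cycles, semi-cycles and crossings -/

/-- `a` is a `P_{t_j}`-arc. -/
def isPArc (P : Fin k → Fin k → List N.A) (j : Fin k) (a : N.A) : Prop :=
  ∃ i, a ∈ P i j

/-- The tail of `a` in the `j`-th residual network `N_j` (in which all
`P_{t_j}`-arcs are reversed). -/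
def rtail (P : Fin k → Fin k → List N.A) (j : Fin k) (a : N.A) : N.V :=
  if ∃ i, a ∈ P i j then N.head a else N.tail a

/-- The head of `a` in the `j`-th residual network `N_j`. -/
def rhead (P : Fin k → Fin k → List N.A) (j : Fin k) (a : N.A) : N.V :=
  if ∃ i, a ∈ P i j then N.tail a else N.head a

/-- `l` is a directed cycle of the residual network `N_j`. -/
def IsResidCycle (P : Fin k → Fin k → List N.A) (j : Fin k) (l : List N.A) : Prop :=
  l ≠ [] ∧ l.Nodup ∧
  l.Chain' (fun a b => N.rhead P j a = N.rtail P j b) ∧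
  (∀ a ∈ l.getLast?, ∀ b ∈ l.head?, N.rhead P j a = N.rtail P j b) ∧
  (l.map (N.rtail P j)).Nodup

/-- A regular cycle of `N_j`: a directed cycle of `N_j` having no isolated
vertex of `P_{t_j}`, i.e. every vertex of the cycle lying on a path of
`P_{t_j}` is incident in the cycle to some (reversed) `P_{t_j}`-arc. -/
def IsRegularCycle (P : Fin k → Fin k → List N.A) (j : Fin k) (l : List N.A) : Prop :=
  N.IsResidCycle P j l ∧
    ∀ v ∈ l.map (N.rtail P j),
      (∃ i, v ∈ N.pathVerts (P i j)) →
      ∃ a ∈ l, N.isPArc P j a ∧ (v = N.tail a ∨ v = N.head a)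

/-- A `P_{t_j}`-semi-cycle of `N`: the arc set of a regular cycle of `N_j`,
with the original orientations of `N` restored. -/
def IsSemiCycle (P : Fin k → Fin k → List N.A) (j : Fin k) (E : Set N.A) : Prop :=
  ∃ l : List N.A, N.IsRegularCycle P j l ∧ E = {a | a ∈ l}

/-- A `P_{t_j}`-crossing of `N`: a `P_{t_j}`-semi-cycle with all its
`P_{t_j}`-arcs removed. -/
def IsCrossing (P : Fin k → Fin k → List N.A) (j : Fin k) (E : Set N.A) : Prop :=
  ∃ l : List N.A, N.IsRegularCycle P j l ∧ E = {a | a ∈ l ∧ ¬ N.isPArc P j a}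

end KPairNetwork

namespace KPairNetwork

variable {k : ℕ} (N : KPairNetwork k)

lemma excess_eq_sum_mul (f : N.A → ℝ) (w : N.V) :
    N.excess f w =
      ∑ a, f a * ((if N.head a = w then 1 else 0) - (if N.tail a = w then 1 else 0)) := by
  simp only [excess, mul_sub, mul_ite, mul_one, mul_zero, Finset.sum_sub_distrib]

lemma excess_sum {ι : Type*} (s : Finset ι) (g : ι → N.A → ℝ) (w : N.V) :
    N.excess (fun a => ∑ i ∈ s, g i a) w = ∑ i ∈ s, N.excess (g i) w := by
  simp only [excess_eq_sum_mul, Finset.sum_mul]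
  exact Finset.sum_comm

lemma excess_const_mul (r : ℝ) (g : N.A → ℝ) (w : N.V) :
    N.excess (fun a => r * g a) w = r * N.excess g w := by
  simp only [excess_eq_sum_mul, Finset.mul_sum, mul_assoc]

variable {N} {u v : N.V} {l : List N.A}

lemma IsPathFrom.nodup (hl : N.IsPathFrom u v l) : l.Nodup := by
  obtain ⟨ord, hord⟩ := N.acyclic
  have hmono : (l.map (ord ∘ N.tail)).IsChain (· < ·) :=
    List.isChain_map_of_isChain _ (fun a b hab => by simpa [← hab] using hord a) hl.2.1
  exact (List.isChain_iff_pairwise.mp hmono).nodup.of_map _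

lemma IsPathFrom.sum_map_sub {M : Type*} [AddCommGroup M] (hl : N.IsPathFrom u v l)
    (g : N.V → M) : (l.map fun a => g (N.head a) - g (N.tail a)).sum = g v - g u := by
  induction l generalizing u with
  | nil => exact absurd rfl hl.1
  | cons a l ih =>
    obtain ⟨-, hc, hu, hv⟩ := hl
    obtain rfl : N.tail a = u := hu a rfl
    cases l with
    | nil => simp [hv a rfl]
    | cons b l =>
      obtain ⟨hab, hc⟩ := List.isChain_cons_cons.mp hc
      have htail : N.IsPathFrom (N.head a) v (b :: l) :=
        ⟨List.cons_ne_nil b l, hc, fun b' hb' => by simp_all, fun x hx => hv x (by simpa using hx)⟩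
      rw [List.map_cons, List.sum_cons, ih htail]
      abel

lemma IsPathFrom.excess_unitFlow (hl : N.IsPathFrom u v l) (w : N.V) :
    N.excess (N.unitFlow l) w = (if v = w then 1 else 0) - (if u = w then 1 else 0) := by
  rw [excess_eq_sum_mul, ← hl.sum_map_sub fun x => if x = w then (1 : ℝ) else 0,
    ← List.sum_toFinset _ hl.nodup]
  simp only [unitFlow, ite_mul, one_mul, zero_mul, ← List.mem_toFinset, Finset.sum_ite_mem,
    Finset.univ_inter]

lemma IsPathFrom.snk_ne (hl : N.IsPathFrom u v l) (j : Fin k) : N.snk j ≠ u := by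
  obtain ⟨a, l', rfl⟩ := List.exists_cons_of_ne_nil hl.1
  rw [← hl.2.2.1 a rfl]
  exact (N.snk_no_out j a).symm

section PathCombination

variable {P : Fin k → Fin k → List N.A} (hP : ∀ i j, N.IsPathFrom (N.src i) (N.snk j) (P i j))
  (c : Fin k → Fin k → ℝ)
include hP

lemma excess_sum_mul_unitFlow (w : N.V) :
    N.excess (fun a => ∑ i, ∑ j, c i j * N.unitFlow (P i j) a) w =
      ∑ i, ∑ j, c i j * ((if N.snk j = w then 1 else 0) - (if N.src i = w then 1 else 0)) := by
  simp only [excess_sum, excess_const_mul, (hP _ _).excess_unitFlow]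

lemma excess_sum_mul_unitFlow_snk (j : Fin k) :
    N.excess (fun a => ∑ i, ∑ j, c i j * N.unitFlow (P i j) a) (N.snk j) = ∑ i, c i j := by
  simp [excess_sum_mul_unitFlow hP, N.snk_inj.eq_iff, fun i => ((hP i j).snk_ne j).symm]

lemma excess_sum_mul_unitFlow_src (i : Fin k) :
    N.excess (fun a => ∑ i, ∑ j, c i j * N.unitFlow (P i j) a) (N.src i) = -∑ j, c i j := by
  simp [excess_sum_mul_unitFlow hP, N.src_inj.eq_iff, fun j => (hP i j).snk_ne j]

lemma excess_sum_mul_unitFlow_of_notMem {w : N.V} (hs : w ∉ Set.range N.src)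
    (ht : w ∉ Set.range N.snk) :
    N.excess (fun a => ∑ i, ∑ j, c i j * N.unitFlow (P i j) a) w = 0 := by
  simp_all [excess_sum_mul_unitFlow hP]

lemma isFlow_sum_mul_unitFlow_iff (l : Fin k) :
    N.IsFlow (N.src l) (N.snk l) (fun a => ∑ i, ∑ j, c i j * N.unitFlow (P i j) a) ↔
      (∀ i, i ≠ l → ∑ j, c i j = 0) ∧ (∀ j, j ≠ l → ∑ i, c i j = 0) := by
  constructor
  · intro hF
    refine ⟨fun i hi => ?_, fun j hj => ?_⟩
    · simpa [excess_sum_mul_unitFlow_src hP] using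
        hF _ (N.src_inj.ne hi) ((hP i l).snk_ne l).symm
    · simpa [excess_sum_mul_unitFlow_snk hP] using
        hF _ ((hP l j).snk_ne j) (N.snk_inj.ne hj)
  · rintro ⟨hrow, hcol⟩ w hwl hwl'
    by_cases hs : w ∈ Set.range N.src
    · obtain ⟨i, rfl⟩ := hs
      simp [excess_sum_mul_unitFlow_src hP, hrow i (ne_of_apply_ne N.src hwl)]
    by_cases ht : w ∈ Set.range N.snk
    · obtain ⟨j, rfl⟩ := ht
      simp [excess_sum_mul_unitFlow_snk hP, hcol j (ne_of_apply_ne N.snk hwl')]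
    exact excess_sum_mul_unitFlow_of_notMem hP c hs ht

end PathCombination

end KPairNetwork

/-- Theorem 1 of the paper: for a fully reachable `k`-pair
network with fixed paths `P i j` from `s i` to `t j`, the multi-flow
`f l = Σ_{i,j} c l i j • f_{i,j}` has rate `(1,…,1)` (i.e. each `f l` is an
`s l`–`t l` flow of rate `1`) iff the coefficients satisfy the row, column and
total-sum conditions. -/
theorem statement0 {k : ℕ} (N : KPairNetwork k) (P : Fin k → Fin k → List N.A)
    (hP : ∀ i j, N.IsPathFrom (N.src i) (N.snk j) (P i j))
    (c : Fin k → Fin k → Fin k → ℝ) (f : Fin k → N.A → ℝ)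
    (hf : ∀ l a, f l a = ∑ i : Fin k, ∑ j : Fin k, c l i j * N.unitFlow (P i j) a) :
    ((∀ l, N.IsFlow (N.src l) (N.snk l) (f l)) ∧
      ∀ l, N.excess (f l) (N.snk l) = 1) ↔
    ∀ l : Fin k,
      (∀ i, i ≠ l → ∑ j : Fin k, c l i j = 0) ∧
      (∀ j, j ≠ l → ∑ i : Fin k, c l i j = 0) ∧
      ∑ i : Fin k, ∑ j : Fin k, c l i j = 1 := by
  obtain rfl : f = fun l a => ∑ i, ∑ j, c l i j * N.unitFlow (P i j) a := funext₂ hf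
  simp only [← forall_and]
  refine forall_congr' fun l => ?_
  rw [N.isFlow_sum_mul_unitFlow_iff hP, N.excess_sum_mul_unitFlow_snk hP]
  have htotal (hcol : ∀ j, j ≠ l → ∑ i, c l i j = 0) : ∑ i, ∑ j, c l i j = ∑ i, c l i l := by
    rw [Finset.sum_comm, Finset.sum_eq_single l (fun j _ => hcol j) (by simp)]
  constructor
  · rintro ⟨⟨hrow, hcol⟩, hrate⟩
    exact ⟨hrow, hcol, (htotal hcol).trans hrate⟩
  · rintro ⟨hrow, hcol, hsum⟩
    exact ⟨⟨hrow, hcol⟩, (htotal hcol).symm.trans hsum⟩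
end

section
/- Let N be a stable 3-pair network with fixed paths r_i = P_{s_i,t_1}, g_i = P_{s_i,t_2}. If there exists i with ℓ(r_i) = 1, then there exists j ≠ i with ℓ(g_j) = 1; symmetrically, if there exists i with ℓ(g_i) = 1, then there exists j ≠ i with ℓ(r_j) = 1. -/
open scoped BigOperators

/-!
Write `r_j = P j c` and `g_j = P j d` for two distinct sinks `c`, `d`. Stability makes every
rearrangement of the paths towards one sink trivial. Hence two such paths share no vertex but the
sink, and no walk avoiding them can shortcut one of them or lead from one to another and back.
The common prefix of `r_j` and `g_j` is always an l.c.s. on both paths. If `g_j` carries a second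
one, then after leaving `r_j` it runs, avoiding the paths towards `t_c`, into some `r_x`; when
`ℓ(r_i) = 1` this forces `x` to be the third index. If this happened for both `j ≠ i`, the two
walks would let `r_j` and `r_x` exchange their tails.
-/

namespace List

variable {α : Type*}

lemma IsInfix.isInfix_take {l m : List α} (h : l <:+: m) (hm : m.Nodup) {n : ℕ}
    (hl : ∀ x ∈ l, x ∈ m.take n) : l <:+: m.take n := by
  obtain ⟨s, t, rfl⟩ := h
  rcases eq_or_ne l [] with rfl | hl₀
  · exact nil_infix
  by_cases hn : s.length + l.length ≤ n
  · refine ⟨s, t.take (n - (s ++ l).length), ?_⟩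
    rw [List.take_append, List.take_of_length_le (l := s ++ l) (by simpa using hn)]
  · have hne : (s ++ l).drop n ≠ [] := by simp; omega
    have hlast : ((s ++ l).drop n).getLast hne = l.getLast hl₀ := by
      rw [List.getLast_drop, List.getLast_append_of_ne_nil]
    have hdrop : l.getLast hl₀ ∈ (s ++ l ++ t).drop n := by
      rw [List.drop_append_of_le_length (by simp; omega), ← hlast]
      exact List.mem_append_left _ (List.getLast_mem _)
    exact (List.disjoint_take_drop hm le_rfl (hl _ (List.getLast_mem _)) hdrop).elim

lemma Nodup.getElem_mem_take_iff {l : List α} (hl : l.Nodup) {t n : ℕ} (ht : t < l.length) :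
    l[t] ∈ l.take n ↔ t < n := by
  refine ⟨fun h => ?_, fun h => List.mem_take_iff_getElem.mpr ⟨t, by omega, rfl⟩⟩
  obtain ⟨t', ht', heq⟩ := List.mem_take_iff_getElem.mp h
  obtain rfl := hl.getElem_inj_iff.mp heq
  omega

lemma Disjoint.mono {l₁ l₂ m₁ m₂ : List α} (h : l₂.Disjoint m₂) (hl : l₁ ⊆ l₂) (hm : m₁ ⊆ m₂) :
    l₁.Disjoint m₁ :=
  fun _ ha hb => h (hl ha) (hm hb)

def commonPrefixLength [DecidableEq α] : List α → List α → ℕ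
  | a :: l, b :: m => if a = b then commonPrefixLength l m + 1 else 0
  | _, _ => 0

variable [DecidableEq α]

lemma take_commonPrefixLength (l m : List α) :
    l.take (commonPrefixLength l m) = m.take (commonPrefixLength l m) := by
  induction l generalizing m with
  | nil => simp [commonPrefixLength]
  | cons a l ih =>
    cases m with
    | nil => simp [commonPrefixLength]
    | cons b m => by_cases hab : a = b <;> simp [commonPrefixLength, hab, ih]

lemma commonPrefixLength_le_length_left (l m : List α) : commonPrefixLength l m ≤ l.length := by
  induction l generalizing m with
  | nil => simp [commonPrefixLength]
  | cons a l ih =>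
    cases m with
    | nil => simp [commonPrefixLength]
    | cons b m => by_cases hab : a = b <;> simp [commonPrefixLength, hab, ih]

lemma commonPrefixLength_comm (l m : List α) : commonPrefixLength l m = commonPrefixLength m l := by
  induction l generalizing m with
  | nil => cases m <;> simp [commonPrefixLength]
  | cons a l ih =>
    cases m with
    | nil => simp [commonPrefixLength]
    | cons b m => by_cases hab : a = b <;> simp [commonPrefixLength, hab, eq_comm, ih]

lemma commonPrefixLength_le_length_right (l m : List α) : commonPrefixLength l m ≤ m.length :=
  commonPrefixLength_comm l m ▸ commonPrefixLength_le_length_left m l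

lemma getElem_commonPrefixLength_ne {l m : List α} (hl : commonPrefixLength l m < l.length)
    (hm : commonPrefixLength l m < m.length) :
    l[commonPrefixLength l m] ≠ m[commonPrefixLength l m] := by
  induction l generalizing m with
  | nil => simp at hl
  | cons a l ih =>
    cases m with
    | nil => simp at hm
    | cons b m =>
      by_cases hab : a = b
      · simp only [commonPrefixLength, hab, if_true] at hl hm ⊢
        simpa using ih (by simpa using hl) (by simpa using hm)
      · simp [commonPrefixLength, hab]

lemma length_le_commonPrefixLength {t l m : List α} (hl : t <+: l) (hm : t <+: m) :
    t.length ≤ commonPrefixLength l m := by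
  induction t generalizing l m with
  | nil => simp
  | cons a t ih =>
    obtain ⟨l, rfl⟩ := hl
    obtain ⟨m, rfl⟩ := hm
    simpa [commonPrefixLength] using ih (List.prefix_append t l) (List.prefix_append t m)

end List

section DisjointUpdate

variable {ι α : Type*} [DecidableEq ι] {F : ι → List α}

lemma pairwise_disjoint_update (hF : Pairwise fun i i' => (F i).Disjoint (F i')) {a : ι}
    {q : List α} (hq : ∀ x, x ≠ a → q.Disjoint (F x)) :
    Pairwise fun i i' => (Function.update F a q i).Disjoint (Function.update F a q i') := by
  intro i i' hii
  simp only [Function.update_apply]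
  split_ifs with h h' h'
  · exact absurd (h.trans h'.symm) hii
  · exact hq i' h'
  · exact (hq i h).symm
  · exact hF hii

lemma pairwise_disjoint_update_update (hF : Pairwise fun i i' => (F i).Disjoint (F i'))
    {a b : ι} (hab : a ≠ b) {qa qb : List α} (hq : qa.Disjoint qb)
    (ha : ∀ x, x ≠ a → x ≠ b → qa.Disjoint (F x)) (hb : ∀ x, x ≠ a → x ≠ b → qb.Disjoint (F x)) :
    Pairwise fun i i' => (Function.update (Function.update F a qa) b qb i).Disjoint
      (Function.update (Function.update F a qa) b qb i') := by
  intro i i' hii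
  simp only [Function.update_apply]
  split_ifs <;> subst_vars
  all_goals first
    | exact absurd rfl hii | exact absurd rfl hab | exact hq | exact hq.symm | exact hF hii
    | exact ha _ ‹_› ‹_› | exact (ha _ ‹_› ‹_›).symm | exact hb _ ‹_› ‹_›
    | exact (hb _ ‹_› ‹_›).symm

end DisjointUpdate

namespace KPairNetwork

variable {k : ℕ} (N : KPairNetwork k)

def vseq (u : N.V) (l : List N.A) : List N.V := u :: l.map N.head

/-- The vertex list `u, head l₀, head l₁, …` also reads `tail l₀, tail l₁, …, v`: consecutive
arcs are incident, `l` leaves `u` and enters `v`, and `u = v` when `l` is empty. -/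
def Walk (u v : N.V) (l : List N.A) : Prop :=
  N.vseq u l = l.map N.tail ++ [v]

variable {N} {u v w : N.V} {l m : List N.A}

@[simp] lemma length_vseq : (N.vseq u l).length = l.length + 1 := by simp [vseq]

@[simp] lemma getElem_vseq_succ {i : ℕ} (hi : i < l.length) :
    (N.vseq u l)[i + 1]'(by simp; omega) = N.head l[i] := by
  simp [vseq]

lemma vseq_take (n : ℕ) : N.vseq u (l.take n) = (N.vseq u l).take (n + 1) := by
  simp [vseq, List.map_take]

lemma vseq_drop {n : ℕ} (hn : n ≤ l.length) :
    N.vseq ((N.vseq u l)[n]'(by simp; omega)) (l.drop n) = (N.vseq u l).drop n := by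
  rw [List.drop_eq_getElem_cons (l := N.vseq u l) (by simp; omega)]
  simp [vseq, List.map_drop]

lemma walk_nil : N.Walk u v [] ↔ u = v := by simp [Walk, vseq]

lemma walk_cons {a : N.A} : N.Walk u v (a :: l) ↔ N.tail a = u ∧ N.Walk (N.head a) v l := by
  simp [Walk, vseq, eq_comm]

lemma walk_iff_isChain : N.Walk u v l ↔ l.IsChain (fun a b => N.head a = N.tail b) ∧
    (∀ a ∈ l.head?, N.tail a = u) ∧ (∀ a ∈ l.getLast?, N.head a = v) ∧ (l = [] → u = v) := by
  induction l generalizing u with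
  | nil => simp [walk_nil]
  | cons a l ih =>
    rw [walk_cons, ih]
    cases l <;> simp [List.isChain_cons_cons]; tauto

lemma isPathFrom_iff_walk : N.IsPathFrom u v l ↔ N.Walk u v l ∧ l ≠ [] := by
  rw [walk_iff_isChain, IsPathFrom]
  tauto

lemma isSeg_iff_walk {s : N.V × List N.A} : N.IsSeg s ↔ N.Walk s.1 (N.segEnd s) s.2 := by
  rw [walk_iff_isChain, IsSeg, segEnd]
  refine ⟨fun ⟨hc, hu⟩ => ⟨hc, hu, fun a ha => by simp_all, fun hl => by simp [hl]⟩,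
    fun h => ⟨h.1, h.2.1⟩⟩

lemma pathVerts_mono (h : l ⊆ m) : N.pathVerts l ⊆ N.pathVerts m :=
  fun _ ⟨a, ha, hv⟩ => ⟨a, h ha, hv⟩

lemma tail_mem_pathVerts {a : N.A} (ha : a ∈ l) : N.tail a ∈ N.pathVerts l :=
  ⟨a, ha, Or.inl rfl⟩

lemma head_mem_pathVerts {a : N.A} (ha : a ∈ l) : N.head a ∈ N.pathVerts l :=
  ⟨a, ha, Or.inr rfl⟩

namespace Walk

lemma isSeg (h : N.Walk u v l) : N.IsSeg (u, l) :=
  ⟨(walk_iff_isChain.mp h).1, (walk_iff_isChain.mp h).2.1⟩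

lemma getElem_vseq (h : N.Walk u v l) {i : ℕ} (hi : i < l.length) :
    (N.vseq u l)[i]'(by simp; omega) = N.tail l[i] := by
  simp [List.getElem_of_eq h, List.getElem_append_left, hi]

lemma getElem_vseq_length (h : N.Walk u v l) : (N.vseq u l)[l.length]'(by simp) = v := by
  simp [List.getElem_of_eq h]

lemma append (h₁ : N.Walk u v l) (h₂ : N.Walk v w m) : N.Walk u w (l ++ m) := by
  have h₁' : u :: l.map N.head = l.map N.tail ++ [v] := h₁
  have h₂' : v :: m.map N.head = m.map N.tail ++ [w] := h₂
  show u :: (l ++ m).map N.head = (l ++ m).map N.tail ++ [w]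
  rw [List.map_append, ← List.cons_append, h₁', List.append_assoc, List.singleton_append, h₂',
    List.map_append, List.append_assoc]

lemma take (h : N.Walk u v l) {n : ℕ} (hn : n ≤ l.length) :
    N.Walk u ((N.vseq u l)[n]'(by simp; omega)) (l.take n) := by
  rw [Walk, vseq_take, List.take_succ_eq_append_getElem (by simp; omega)]
  congr 1
  rw [congrArg (List.take n) h, List.take_append_of_le_length (by simpa using hn), List.map_take]

lemma drop (h : N.Walk u v l) {n : ℕ} (hn : n ≤ l.length) :
    N.Walk ((N.vseq u l)[n]'(by simp; omega)) v (l.drop n) := by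
  rw [Walk, vseq_drop hn, h, List.drop_append_of_le_length (by simpa using hn), List.map_drop]

lemma take_drop (h : N.Walk u v l) {n m : ℕ} (hnm : n ≤ m) (hm : m ≤ l.length) :
    N.Walk ((N.vseq u l)[n]'(by simp; omega)) ((N.vseq u l)[m]'(by simp; omega))
      ((l.drop n).take (m - n)) := by
  have := (h.drop (hnm.trans hm)).take (n := m - n) (by simp; omega)
  simpa only [vseq_drop (hnm.trans hm), List.getElem_drop, Nat.add_sub_cancel' hnm] using this

lemma of_append (h : N.Walk u w (l ++ m)) : ∃ v, N.Walk u v l ∧ N.Walk v w m := by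
  have h₁ := h.take (n := l.length) (by simp)
  have h₂ := h.drop (n := l.length) (by simp)
  rw [List.take_left' rfl] at h₁
  rw [List.drop_left' rfl] at h₂
  exact ⟨_, h₁, h₂⟩

lemma nodup_vseq (h : N.Walk u v l) : (N.vseq u l).Nodup := by
  obtain ⟨ord, hord⟩ := N.acyclic
  suffices ((N.vseq u l).map ord).IsChain (· < ·) from
    (List.isChain_iff_pairwise.mp this).nodup.of_map ord
  induction l generalizing u with
  | nil => simp [vseq]
  | cons a l ih =>
    obtain ⟨rfl, h'⟩ := walk_cons.mp h
    exact List.isChain_cons_cons.mpr ⟨hord a, ih h'⟩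

lemma nodup (h : N.Walk u v l) : l.Nodup := by
  have := h.nodup_vseq
  rw [show N.vseq u l = _ from h, List.nodup_append] at this
  exact this.1.of_map N.tail

lemma eq_nil_of_closed (h : N.Walk u u l) : l = [] := by
  have hnd := h.nodup_vseq
  rw [show N.vseq u l = _ from h, List.nodup_append] at hnd
  cases l with
  | nil => rfl
  | cons a l => exact absurd (walk_cons.mp h).1 (hnd.2.2 _ (by simp) u (by simp))

lemma mem_take_of_head_mem (h : N.Walk u v l) {e : N.A} (he : e ∈ l) {n : ℕ}
    (hn : N.head e ∈ (N.vseq u l).take (n + 1)) : e ∈ l.take n := by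
  obtain ⟨q, hq, rfl⟩ := List.getElem_of_mem he
  rw [← getElem_vseq_succ hq, h.nodup_vseq.getElem_mem_take_iff] at hn
  exact (h.nodup.getElem_mem_take_iff hq).mpr (by omega)

lemma isPrefix_of_isInfix {p s : List N.A} (hp : N.Walk u v p) (hs : N.Walk u w s)
    (h : s <:+: p) : s <+: p := by
  obtain ⟨x, y, rfl⟩ := h
  cases s with
  | nil => exact List.nil_prefix
  | cons a s =>
    obtain ⟨v', hx, hrest⟩ := Walk.of_append (l := x) (by simpa using hp)
    obtain rfl : v' = u := (walk_cons.mp hrest).1.symm.trans (walk_cons.mp hs).1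
    rw [hx.eq_nil_of_closed]
    exact List.prefix_append _ _

lemma mem_segVerts_iff (h : N.Walk u v l) {x : N.V} : x ∈ N.segVerts (u, l) ↔ x ∈ N.vseq u l := by
  simp only [segVerts, pathVerts, Set.mem_insert_iff, Set.mem_ofPred_eq]
  constructor
  · rintro (rfl | ⟨a, ha, rfl | rfl⟩)
    · exact List.mem_cons_self
    · rw [show N.vseq u l = _ from h]
      exact List.mem_append_left _ (List.mem_map_of_mem ha)
    · exact List.mem_cons_of_mem _ (List.mem_map_of_mem ha)
  · intro hx
    rcases List.mem_cons.mp hx with rfl | hx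
    · exact Or.inl rfl
    · obtain ⟨a, ha, rfl⟩ := List.mem_map.mp hx
      exact Or.inr ⟨a, ha, Or.inr rfl⟩

lemma start_mem_pathVerts (h : N.Walk u v l) (hl : l ≠ []) : u ∈ N.pathVerts l := by
  cases l with
  | nil => contradiction
  | cons a l => exact ⟨a, List.mem_cons_self, Or.inl (walk_cons.mp h).1.symm⟩

lemma mem_pathVerts_iff (h : N.Walk u v l) (hl : l ≠ []) {x : N.V} :
    x ∈ N.pathVerts l ↔ x ∈ N.vseq u l := by
  rw [← h.mem_segVerts_iff, segVerts, Set.insert_eq_of_mem (h.start_mem_pathVerts hl)]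

lemma end_mem_pathVerts (h : N.Walk u v l) (hl : l ≠ []) : v ∈ N.pathVerts l :=
  (h.mem_pathVerts_iff hl).mpr (h.getElem_vseq_length ▸ List.getElem_mem _)

lemma eq_of_snk_mem_pathVerts {j j' : Fin k} (h : N.Walk u (N.snk j') l)
    (hj : N.snk j ∈ N.pathVerts l) : j = j' := by
  have := (h.mem_segVerts_iff).mp (Set.mem_insert_of_mem _ hj)
  rw [show N.vseq u l = _ from h, List.mem_append, List.mem_map, List.mem_singleton] at this
  rcases this with ⟨a, -, ha⟩ | hj'
  · exact absurd ha (N.snk_no_out j a)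
  · exact N.snk_inj hj'

end Walk

lemma take_vseq_commonPrefixLength (u : N.V) (l m : List N.A) :
    (N.vseq u l).take (l.commonPrefixLength m + 1) =
      (N.vseq u m).take (l.commonPrefixLength m + 1) := by
  rw [← vseq_take, ← vseq_take, List.take_commonPrefixLength]

lemma getElem_vseq_eq_of_le_commonPrefixLength (u : N.V) {l m : List N.A} {t : ℕ}
    (ht : t ≤ l.commonPrefixLength m) (hl : t < (N.vseq u l).length)
    (hm : t < (N.vseq u m).length) : (N.vseq u l)[t] = (N.vseq u m)[t] := by
  have h := List.getElem_of_eq (take_vseq_commonPrefixLength u l m) (i := t)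
    (by simp only [List.length_take]; omega)
  rwa [List.getElem_take, List.getElem_take] at h

lemma SegLE.segVerts_subset {s s' : N.V × List N.A} (h : N.SegLE s s') :
    N.segVerts s ⊆ N.segVerts s' :=
  Set.insert_subset h.2 ((pathVerts_mono h.1.subset).trans (Set.subset_insert _ _))

lemma SegOn.segVerts_subset {s : N.V × List N.A} (h : N.SegOn s l) :
    N.segVerts s ⊆ N.pathVerts l :=
  Set.insert_subset h.2 (pathVerts_mono h.1.subset)

lemma eq_of_isSeg_of_snd_eq {s s' : N.V × List N.A} (hs : N.IsSeg s) (hs' : N.IsSeg s')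
    (h₂ : s.2 = s'.2) (h₁ : s.1 ∈ N.segVerts s') : s = s' := by
  refine Prod.ext ?_ h₂
  rcases s with ⟨x, _ | ⟨a, l⟩⟩ <;> rcases s' with ⟨x', l'⟩ <;> subst h₂
  · simpa [segVerts, pathVerts] using h₁
  · exact (hs.2 a rfl).symm.trans (hs'.2 a rfl)

lemma exists_isLCS_of_mem {ps : Set (List N.A)} {p : List N.A} (hp : p ∈ ps) {y : N.V}
    (hy : ∀ q ∈ ps, y ∈ N.pathVerts q) : ∃ s, N.IsLCS ps s ∧ y ∈ N.segVerts s := by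
  set F := {s | N.IsSeg s ∧ (∀ q ∈ ps, N.SegOn s q) ∧ y ∈ N.segVerts s}
  have hF : F.Finite := by
    refine ((Set.toFinite Set.univ).prod p.sublists.finite_toSet).subset ?_
    rintro s ⟨-, hs, -⟩
    exact ⟨trivial, List.mem_sublists.mpr (hs p hp).1.sublist⟩
  obtain ⟨s, ⟨hseg, hon, hys⟩, hmax⟩ := hF.exists_maximalFor (fun s => s.2.length) F
    ⟨(y, []), ⟨List.isChain_nil, by simp⟩, fun q hq => ⟨List.nil_infix, hy q hq⟩,
      Set.mem_insert _ _⟩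
  refine ⟨s, ⟨hseg, hon, fun s' hseg' hle hne => ?_⟩, hys⟩
  by_contra! hon'
  have hlen := hmax ⟨hseg', hon', hle.segVerts_subset hys⟩ hle.1.length_le
  exact hne (eq_of_isSeg_of_snd_eq hseg hseg' (hle.1.eq_of_length (hle.1.length_le.antisymm hlen))
    hle.2).symm

/-- A longer common segment would also have to start at `u`, hence be a common prefix. -/
lemma Walk.isLCS_commonPrefix {p q : List N.A} (hp : N.Walk u v p) (hq : N.Walk u w q)
    (hpne : p ≠ []) (hqne : q ≠ []) (hu : ∀ a, N.head a ≠ u) :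
    N.IsLCS {p, q} (u, p.take (p.commonPrefixLength q)) := by
  set n := p.commonPrefixLength q
  have htake : p.take n = q.take n := p.take_commonPrefixLength q
  refine ⟨(hp.take (p.commonPrefixLength_le_length_left q)).isSeg, ?_, fun s' hs' hle hne => ?_⟩
  · rintro r (rfl | rfl)
    · exact ⟨(List.take_prefix n r).isInfix, hp.start_mem_pathVerts hpne⟩
    · exact ⟨htake ▸ (List.take_prefix n r).isInfix, hq.start_mem_pathVerts hqne⟩
  by_contra! hon
  have hw' := isSeg_iff_walk.mp hs'
  obtain rfl : s'.1 = u := by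
    have := hw'.mem_segVerts_iff.mp hle.2
    rcases List.mem_cons.mp this with h | h
    · exact h.symm
    · obtain ⟨a, -, ha⟩ := List.mem_map.mp h
      exact absurd ha (hu a)
  have hpre := hp.isPrefix_of_isInfix hw' (hon p (by simp)).1
  have hpre' := hq.isPrefix_of_isInfix hw' (hon q (by simp)).1
  have hlen : s'.2.length = n := (List.length_le_commonPrefixLength hpre hpre').antisymm
    (by simpa [n, p.commonPrefixLength_le_length_left q] using hle.1.length_le)
  exact hne (Prod.ext rfl (by rw [List.prefix_iff_eq_take.mp hpre, hlen]))

lemma lcsCount_eq_one_iff {P : Fin k → Fin k → List N.A} {c d : Fin k} {p : List N.A}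
    {s₀ : N.V × List N.A} (h₀ : N.IsPairLCSOn P c d p s₀) :
    N.lcsCount P c d p = 1 ↔ ∀ s, N.IsPairLCSOn P c d p s → s = s₀ := by
  rw [lcsCount, Nat.card_coe_set_eq, Set.ncard_eq_one]
  refine ⟨fun ⟨a, ha⟩ s hs => ?_, fun h => ⟨s₀, Set.eq_singleton_iff_unique_mem.mpr ⟨h₀, h⟩⟩⟩
  have hs : s ∈ ({a} : Set _) := ha ▸ hs
  have h₀ : s₀ ∈ ({a} : Set _) := ha ▸ h₀
  exact hs.trans h₀.symm

lemma lcsCount_comm (P : Fin k → Fin k → List N.A) (c d : Fin k) (p : List N.A) :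
    N.lcsCount P c d p = N.lcsCount P d c p := by
  have h (s : N.V × List N.A) : N.IsPairLCSOn P c d p s ↔ N.IsPairLCSOn P d c p s := by
    simp only [IsPairLCSOn, Set.pair_comm (P _ c)]
    rw [exists_comm]
  simp only [lcsCount, h]

namespace IsStableSystem

variable {P : Fin k → Fin k → List N.A} (hP : N.IsStableSystem P)
include hP

lemma walk (i j : Fin k) : N.Walk (N.src i) (N.snk j) (P i j) :=
  (isPathFrom_iff_walk.mp (hP.1.1 i j)).1

lemma ne_nil (i j : Fin k) : P i j ≠ [] :=
  (isPathFrom_iff_walk.mp (hP.1.1 i j)).2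

lemma disjoint {i i' : Fin k} (h : i ≠ i') (j : Fin k) : (P i j).Disjoint (P i' j) :=
  fun a ha ha' => hP.1.2 j i i' h a ha ha'

lemma src_ne_snk (i j : Fin k) : N.src i ≠ N.snk j := by
  obtain ⟨a, l, hl⟩ := List.exists_cons_of_ne_nil (hP.ne_nil i j)
  have := hP.walk i j
  rw [hl, walk_cons] at this
  exact fun h => N.snk_no_out j a (this.1.trans h)

lemma snk_not_mem_pathVerts {j j' : Fin k} (h : j ≠ j') (i : Fin k) :
    N.snk j ∉ N.pathVerts (P i j') :=
  fun hj => h ((hP.walk i j').eq_of_snk_mem_pathVerts hj)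

lemma eq_of_pairwise_disjoint (j : Fin k) {Q : Fin k → List N.A}
    (hQ : ∀ i, N.Walk (N.src i) (N.snk j) (Q i))
    (hQd : Pairwise fun i i' => (Q i).Disjoint (Q i')) (i : Fin k) : Q i = P i j := by
  refine hP.2 j Q (fun i => isPathFrom_iff_walk.mpr ⟨hQ i, ?_⟩) (fun i i' h a => @hQd i i' h a) i
  rintro hnil
  exact hP.src_ne_snk i j (walk_nil.mp (hnil ▸ hQ i))

lemma eq_of_update {j a : Fin k} {q : List N.A} (hq : N.Walk (N.src a) (N.snk j) q)
    (hfree : ∀ x, x ≠ a → q.Disjoint (P x j)) : q = P a j := by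
  have hQ : ∀ i, N.Walk (N.src i) (N.snk j) (Function.update (P · j) a q i) := by
    intro i
    rcases eq_or_ne i a with rfl | hi
    · simpa using hq
    · simpa [hi] using hP.walk i j
  simpa using hP.eq_of_pairwise_disjoint j hQ
    (pairwise_disjoint_update (fun _ _ h => hP.disjoint h j) hfree) a

lemma eq_of_update_update {j a b : Fin k} (hab : a ≠ b) {qa qb : List N.A}
    (hqa : N.Walk (N.src a) (N.snk j) qa) (hqb : N.Walk (N.src b) (N.snk j) qb)
    (hq : qa.Disjoint qb) (ha : ∀ x, x ≠ a → x ≠ b → qa.Disjoint (P x j))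
    (hb : ∀ x, x ≠ a → x ≠ b → qb.Disjoint (P x j)) : qa = P a j := by
  have hQ : ∀ i, N.Walk (N.src i) (N.snk j)
      (Function.update (Function.update (P · j) a qa) b qb i) := by
    intro i
    rcases eq_or_ne i b with rfl | hib
    · simpa using hqb
    rcases eq_or_ne i a with rfl | hia
    · simpa [hib] using hqa
    · simpa [hia, hib] using hP.walk i j
  simpa [hab] using hP.eq_of_pairwise_disjoint j hQ
    (pairwise_disjoint_update_update (fun _ _ h => hP.disjoint h j) hab hq ha hb) a

lemma not_free_shortcut {j a : Fin k} {n m : ℕ} (hnm : n ≤ m) (hm : m ≤ (P a j).length)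
    {c : List N.A}
    (hc : N.Walk ((N.vseq (N.src a) (P a j))[n]'(by simp; omega))
      ((N.vseq (N.src a) (P a j))[m]'(by simp; omega)) c)
    (hcne : c ≠ []) (hfree : ∀ x, c.Disjoint (P x j)) : False := by
  have wa := hP.walk a j
  have key := hP.eq_of_update ((wa.take (hnm.trans hm)).append (hc.append (wa.drop hm)))
    fun x hx => by
      simp only [List.disjoint_append_left]
      exact ⟨(hP.disjoint (Ne.symm hx) j).mono (List.take_subset _ _) (List.Subset.refl _),
        hfree x, (hP.disjoint (Ne.symm hx) j).mono (List.drop_subset _ _) (List.Subset.refl _)⟩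
  obtain ⟨e, c, rfl⟩ := List.exists_cons_of_ne_nil hcne
  exact hfree a List.mem_cons_self (key ▸ by simp)

/-- Exchanging the tails of the paths from `s_a` and `s_b` along arc-disjoint walks `c`, `c'`
that avoid all paths towards `t_j` gives a new system, so the exchange must change nothing. -/
lemma append_drop_eq_drop_of_exchange {j a b : Fin k} (hab : a ≠ b) {n m n' m' : ℕ}
    (hnm' : n ≤ m') (hm' : m' ≤ (P a j).length) (hn'm : n' ≤ m) (hm : m ≤ (P b j).length)
    {c c' : List N.A}
    (hc : N.Walk ((N.vseq (N.src a) (P a j))[n]'(by simp; omega))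
      ((N.vseq (N.src b) (P b j))[m]'(by simp; omega)) c)
    (hc' : N.Walk ((N.vseq (N.src b) (P b j))[n']'(by simp; omega))
      ((N.vseq (N.src a) (P a j))[m']'(by simp; omega)) c')
    (hfree : ∀ x, c.Disjoint (P x j)) (hfree' : ∀ x, c'.Disjoint (P x j))
    (hcc' : c.Disjoint c') : c ++ (P b j).drop m = (P a j).drop n := by
  have wa := hP.walk a j
  have wb := hP.walk b j
  have key := hP.eq_of_update_update hab
    ((wa.take (hnm'.trans hm')).append (hc.append (wb.drop hm)))
    ((wb.take (hn'm.trans hm)).append (hc'.append (wa.drop hm'))) ?_ ?_ ?_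
  · exact List.append_cancel_left (key.trans (List.take_append_drop n _).symm)
  · simp only [List.disjoint_append_left, List.disjoint_append_right]
    refine ⟨⟨?_, ?_, ?_⟩, ⟨?_, hcc', ?_⟩, ?_, ?_, ?_⟩
    · exact (hP.disjoint hab j).mono (List.take_subset _ _) (List.take_subset _ _)
    · exact (hfree b).mono (List.Subset.refl _) (List.take_subset _ _)
    · exact (List.disjoint_take_drop wb.nodup hn'm).symm
    · exact (hfree' a).symm.mono (List.take_subset _ _) (List.Subset.refl _)
    · exact (hfree' b).symm.mono (List.drop_subset _ _) (List.Subset.refl _)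
    · exact List.disjoint_take_drop wa.nodup hnm'
    · exact (hfree a).mono (List.Subset.refl _) (List.drop_subset _ _)
    · exact (hP.disjoint hab.symm j).mono (List.drop_subset _ _) (List.drop_subset _ _)
  · intro x hxa hxb
    simp only [List.disjoint_append_left]
    exact ⟨(hP.disjoint (Ne.symm hxa) j).mono (List.take_subset _ _) (List.Subset.refl _), hfree x,
      (hP.disjoint (Ne.symm hxb) j).mono (List.drop_subset _ _) (List.Subset.refl _)⟩
  · intro x hxa hxb
    simp only [List.disjoint_append_left]
    exact ⟨(hP.disjoint (Ne.symm hxb) j).mono (List.take_subset _ _) (List.Subset.refl _), hfree' x,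
      (hP.disjoint (Ne.symm hxa) j).mono (List.drop_subset _ _) (List.Subset.refl _)⟩

lemma not_free_crossing {j a b : Fin k} (hab : a ≠ b) {n m n' m' : ℕ}
    (hnm' : n ≤ m') (hm' : m' ≤ (P a j).length) (hn'm : n' ≤ m) (hm : m ≤ (P b j).length)
    {c c' : List N.A}
    (hc : N.Walk ((N.vseq (N.src a) (P a j))[n]'(by simp; omega))
      ((N.vseq (N.src b) (P b j))[m]'(by simp; omega)) c)
    (hc' : N.Walk ((N.vseq (N.src b) (P b j))[n']'(by simp; omega))
      ((N.vseq (N.src a) (P a j))[m']'(by simp; omega)) c')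
    (hcne : c ≠ []) (hfree : ∀ x, c.Disjoint (P x j)) (hfree' : ∀ x, c'.Disjoint (P x j))
    (hcc' : c.Disjoint c') : False := by
  have key := hP.append_drop_eq_drop_of_exchange hab hnm' hm' hn'm hm hc hc' hfree hfree' hcc'
  obtain ⟨e, c, rfl⟩ := List.exists_cons_of_ne_nil hcne
  exact hfree a List.mem_cons_self (List.mem_of_mem_drop (i := n) (by simp [← key]))

lemma eq_snk_of_mem_pathVerts {j a b : Fin k} (hab : a ≠ b) {v : N.V}
    (hva : v ∈ N.pathVerts (P a j)) (hvb : v ∈ N.pathVerts (P b j)) : v = N.snk j := by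
  by_contra hv
  have wa := hP.walk a j
  have wb := hP.walk b j
  obtain ⟨n, hn, rfl⟩ := List.getElem_of_mem ((wa.mem_pathVerts_iff (hP.ne_nil a j)).mp hva)
  obtain ⟨m, hm, hvm⟩ := List.getElem_of_mem ((wb.mem_pathVerts_iff (hP.ne_nil b j)).mp hvb)
  have hn' : n < (P a j).length := by
    rw [length_vseq] at hn
    refine lt_of_le_of_ne (by omega) fun h => hv ?_
    simp only [h, wa.getElem_vseq_length]
  have key := hP.append_drop_eq_drop_of_exchange hab le_rfl hn'.le le_rfl (by simp at hm; omega)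
    (walk_nil.mpr hvm.symm) (walk_nil.mpr hvm) (fun _ => List.disjoint_nil_left _)
    (fun _ => List.disjoint_nil_left _) (List.disjoint_nil_left _)
  rw [List.nil_append] at key
  obtain ⟨e, l, he⟩ := List.exists_cons_of_ne_nil (show (P a j).drop n ≠ [] by simpa)
  exact hP.disjoint hab j (List.mem_of_mem_drop (show e ∈ (P a j).drop n by simp [he]))
    (List.mem_of_mem_drop (show e ∈ (P b j).drop m by simp [key, he]))

variable {c d : Fin k}

lemma isLCS_commonPrefix (j : Fin k) :
    N.IsLCS {P j c, P j d} (N.src j, (P j c).take ((P j c).commonPrefixLength (P j d))) :=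
  (hP.walk j c).isLCS_commonPrefix (hP.walk j d) (hP.ne_nil j c) (hP.ne_nil j d)
    (fun a => N.src_no_in j a)

variable (hcd : c ≠ d)
include hcd

lemma commonPrefixLength_lt_length (j : Fin k) :
    (P j c).commonPrefixLength (P j d) < (P j c).length := by
  refine lt_of_le_of_ne ((P j c).commonPrefixLength_le_length_left _) fun h => ?_
  have hpre : P j c <+: P j d := by
    have := (P j c).take_commonPrefixLength (P j d)
    rw [h, List.take_length] at this
    exact this ▸ List.take_prefix _ _
  exact hP.snk_not_mem_pathVerts hcd j
    (pathVerts_mono hpre.subset ((hP.walk j c).end_mem_pathVerts (hP.ne_nil j c)))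

lemma commonPrefixLength_lt_length_right (j : Fin k) :
    (P j c).commonPrefixLength (P j d) < (P j d).length :=
  (P j c).commonPrefixLength_comm (P j d) ▸ hP.commonPrefixLength_lt_length hcd.symm j

/-- On `r_j` this arc would extend the common prefix; on another path towards `t_c` its tail would
be a second common vertex of two such paths. -/
lemma getElem_commonPrefixLength_not_mem (j y : Fin k) :
    (P j d)[(P j c).commonPrefixLength (P j d)]'(hP.commonPrefixLength_lt_length_right hcd j) ∉
      P y c := by
  set n := (P j c).commonPrefixLength (P j d)
  have hnr := hP.commonPrefixLength_lt_length hcd j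
  have hng := hP.commonPrefixLength_lt_length_right hcd j
  have wr := hP.walk j c
  have htail : N.tail (P j d)[n] = N.tail (P j c)[n] := by
    rw [← wr.getElem_vseq hnr, ← (hP.walk j d).getElem_vseq hng,
      getElem_vseq_eq_of_le_commonPrefixLength _ le_rfl]
  intro hy
  rcases eq_or_ne j y with rfl | hjy
  · obtain ⟨q, hq, hqe⟩ := List.getElem_of_mem hy
    have : q = n := by
      rw [← wr.nodup_vseq.getElem_inj_iff (hi := by simp; omega) (hj := by simp; omega),
        wr.getElem_vseq hq, wr.getElem_vseq hnr, hqe, htail]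
    subst this
    exact List.getElem_commonPrefixLength_ne hnr hng hqe
  · have := hP.eq_snk_of_mem_pathVerts hjy (tail_mem_pathVerts (List.getElem_mem hnr))
      (htail ▸ tail_mem_pathVerts hy)
    exact N.snk_no_out c _ this

/-- An l.c.s. on `g_j` of a pair `{r_a, g_b}` has all its vertices on `g_j` and `r_a`, so by the
hypothesis it lies inside the common prefix of `r_j` and `g_j`, which is itself an l.c.s. -/
lemma lcsCount_eq_one_of_forall_le (j : Fin k)
    (h : ∀ t (ht : t < (N.vseq (N.src j) (P j d)).length),
      (∃ i, (N.vseq (N.src j) (P j d))[t] ∈ N.pathVerts (P i c)) →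
        t ≤ (P j c).commonPrefixLength (P j d)) :
    N.lcsCount P c d (P j d) = 1 := by
  set n := (P j c).commonPrefixLength (P j d)
  have wr := hP.walk j c
  have wg := hP.walk j d
  have hstar := hP.isLCS_commonPrefix (c := c) (d := d) j
  have hpre : ∀ x ∈ N.pathVerts (P j d), ∀ i, x ∈ N.pathVerts (P i c) →
      x ∈ (N.vseq (N.src j) (P j d)).take (n + 1) := by
    intro x hx i hxi
    obtain ⟨t, ht, rfl⟩ := List.getElem_of_mem ((wg.mem_pathVerts_iff (hP.ne_nil j d)).mp hx)
    exact (wg.nodup_vseq.getElem_mem_take_iff ht).mpr (Nat.lt_succ_of_le (h t ht ⟨i, hxi⟩))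
  rw [lcsCount_eq_one_iff ⟨⟨j, j, hstar⟩, hstar.2.1 _ (by simp)⟩]
  rintro s ⟨⟨a, b, hs⟩, hsg⟩
  have hsa := hs.2.1 (P a c) (by simp)
  have hsb := hs.2.1 (P b d) (by simp)
  obtain rfl : j = b := by
    by_contra hb
    exact hP.snk_not_mem_pathVerts hcd.symm a
      (hP.eq_snk_of_mem_pathVerts (Ne.symm hb) hsb.2 hsg.2 ▸ hsa.2)
  have hs₁ := hpre _ hsg.2 a hsa.2
  obtain rfl : j = a := by
    by_contra ha
    have hs₁r : s.1 ∈ N.pathVerts (P j c) := (wr.mem_pathVerts_iff (hP.ne_nil j c)).mpr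
      (List.mem_of_mem_take (take_vseq_commonPrefixLength (N.src j) (P j c) (P j d) ▸ hs₁))
    exact hP.snk_not_mem_pathVerts hcd j
      (hP.eq_snk_of_mem_pathVerts (Ne.symm ha) hsa.2 hs₁r ▸ hsg.2)
  have hle : N.SegLE s (N.src j, (P j c).take n) := by
    rw [List.take_commonPrefixLength]
    refine ⟨hsg.1.isInfix_take wg.nodup fun e he => ?_, ?_⟩
    · exact wg.mem_take_of_head_mem (hsg.1.subset he)
        (hpre _ (head_mem_pathVerts (hsg.1.subset he)) j (head_mem_pathVerts (hsa.1.subset he)))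
    · rwa [(wg.take ((P j c).commonPrefixLength_le_length_right _)).mem_segVerts_iff, vseq_take]
  by_contra hne
  obtain ⟨p, hp, hnot⟩ := hs.2.2 _ hstar.1 hle (Ne.symm hne)
  exact hnot (hstar.2.1 p hp)

/-- `conn` is the part of `g_j` from where it leaves `r_j` to the next vertex on a path towards
`t_c`; such a vertex exists by `lcsCount_eq_one_of_forall_le`. -/
lemma exists_free_walk_of_lcsCount_ne_one (j : Fin k) (hj : N.lcsCount P c d (P j d) ≠ 1) :
    ∃ m, ∃ _ : (P j c).commonPrefixLength (P j d) < m, ∃ hm : m ≤ (P j d).length,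
      ∃ conn : List N.A, conn ≠ [] ∧ conn ⊆ P j d ∧ (∀ y, conn.Disjoint (P y c)) ∧
        N.Walk ((N.vseq (N.src j) (P j d))[(P j c).commonPrefixLength (P j d)]'(by simp; omega))
          ((N.vseq (N.src j) (P j d))[m]'(by simp; omega)) conn ∧
        ∃ x, (N.vseq (N.src j) (P j d))[m]'(by simp; omega) ∈ N.pathVerts (P x c) := by
  set n := (P j c).commonPrefixLength (P j d)
  have wg := hP.walk j d
  have hex : ∃ m, n < m ∧ ∃ hm : m < (N.vseq (N.src j) (P j d)).length,
      ∃ x, (N.vseq (N.src j) (P j d))[m] ∈ N.pathVerts (P x c) := by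
    by_contra! hno
    exact hj (hP.lcsCount_eq_one_of_forall_le hcd j
      fun t ht ⟨x, hx⟩ => not_lt.mp fun hlt => hno t hlt ht x hx)
  classical
  obtain ⟨hnm, hm, x, hx⟩ := Nat.find_spec hex
  have hm' : Nat.find hex ≤ (P j d).length := by
    have : (N.vseq (N.src j) (P j d)).length = (P j d).length + 1 := length_vseq
    omega
  refine ⟨_, hnm, hm', _, ?_, List.Subset.trans (List.take_subset _ _) (List.drop_subset _ _),
    fun y e he hey => ?_, wg.take_drop hnm.le hm', x, hx⟩
  · simp only [ne_eq, List.take_eq_nil_iff, List.drop_eq_nil_iff]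
    omega
  obtain ⟨t, ht, rfl⟩ := List.getElem_of_mem he
  simp only [List.getElem_take, List.getElem_drop] at hey
  simp only [List.length_take, List.length_drop] at ht
  rcases Nat.eq_zero_or_pos t with rfl | ht₀
  · exact hP.getElem_commonPrefixLength_not_mem hcd j y hey
  · refine Nat.find_min hex (m := n + t) (by omega) ⟨by omega, by simp; omega, y, ?_⟩
    rw [wg.getElem_vseq (by omega)]
    exact tail_mem_pathVerts hey

/-- The walk `conn` of `exists_free_walk_of_lcsCount_ne_one` cannot end on `r_j` (it would be a
shortcut) nor on `r_i` (it would give a second l.c.s. on `r_i`), and where it ends on `r_x`, that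
vertex lies on `g_j`, hence not on the common prefix of `r_x` and `g_x`. -/
lemma exists_connector {i j : Fin k} (hij : i ≠ j) (hi : N.lcsCount P c d (P i c) = 1)
    (hj : N.lcsCount P c d (P j d) ≠ 1) :
    ∃ x, x ≠ i ∧ x ≠ j ∧ ∃ m, ∃ _ : (P x c).commonPrefixLength (P x d) ≤ m,
      ∃ hm : m ≤ (P x c).length, ∃ conn : List N.A, conn ≠ [] ∧ conn ⊆ P j d ∧
        (∀ y, conn.Disjoint (P y c)) ∧
        N.Walk ((N.vseq (N.src j) (P j c))[(P j c).commonPrefixLength (P j d)]'(by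
            simpa using Nat.lt_succ_of_le ((P j c).commonPrefixLength_le_length_left _)))
          ((N.vseq (N.src x) (P x c))[m]'(by simp; omega)) conn := by
  obtain ⟨m, hnm, hm, conn, hne, hsub, hfree, hwalk, x, hx⟩ :=
    hP.exists_free_walk_of_lcsCount_ne_one hcd j hj
  set n := (P j c).commonPrefixLength (P j d)
  have hnr := (P j c).commonPrefixLength_le_length_left (P j d)
  have wg := hP.walk j d
  have hstart := getElem_vseq_eq_of_le_commonPrefixLength (N.src j) (le_refl n)
    (by simp; omega) (by simp; omega)
  have hyg : (N.vseq (N.src j) (P j d))[m]'(by simp; omega) ∈ N.pathVerts (P j d) :=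
    (wg.mem_pathVerts_iff (hP.ne_nil j d)).mpr (List.getElem_mem _)
  obtain ⟨mx, hmx, hymx⟩ := List.getElem_of_mem (((hP.walk x c).mem_pathVerts_iff
    (hP.ne_nil x c)).mp hx)
  rw [length_vseq] at hmx
  rcases eq_or_ne j x with rfl | hjx
  · have hnmx : n < mx := by
      by_contra! hle
      rw [getElem_vseq_eq_of_le_commonPrefixLength (l := P j c) (m := P j d) _ hle
        (by simp; omega) (by simp; omega), wg.nodup_vseq.getElem_inj_iff] at hymx
      omega
    refine (hP.not_free_shortcut (j := c) (a := j) hnmx.le (by omega) ?_ hne hfree).elim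
    rwa [hstart, hymx]
  rcases eq_or_ne i x with rfl | hix
  · obtain ⟨s, hs, hys⟩ := exists_isLCS_of_mem (ps := {P i c, P j d}) (p := P i c) (by simp)
      (by rintro q (rfl | rfl); exacts [hx, hyg])
    have hstar := hP.isLCS_commonPrefix (c := c) (d := d) i
    obtain rfl := (lcsCount_eq_one_iff ⟨⟨i, i, hstar⟩, hstar.2.1 _ (by simp)⟩).mp hi s
      ⟨⟨i, j, hs⟩, hs.2.1 _ (by simp)⟩
    have hyi := SegOn.segVerts_subset (hstar.2.1 (P i d) (by simp)) hys
    exact (hP.snk_not_mem_pathVerts hcd.symm i (hP.eq_snk_of_mem_pathVerts hij hyi hyg ▸ hx)).elim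
  refine ⟨x, hix.symm, hjx.symm, mx, ?_, by omega, conn, hne, hsub, hfree, by rwa [hstart, hymx]⟩
  by_contra! hlt
  have := (P x c).commonPrefixLength_le_length_right (P x d)
  have hyx : (N.vseq (N.src j) (P j d))[m]'(by simp; omega) ∈ N.pathVerts (P x d) := by
    rw [← hymx, getElem_vseq_eq_of_le_commonPrefixLength (l := P x c) (m := P x d) _ hlt.le
      (by simp; omega) (by simp; omega)]
    exact ((hP.walk x d).mem_pathVerts_iff (hP.ne_nil x d)).mpr (List.getElem_mem _)
  exact hP.snk_not_mem_pathVerts hcd.symm x (hP.eq_snk_of_mem_pathVerts hjx.symm hyx hyg ▸ hx)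

end IsStableSystem

/-- Were `ℓ(g_j) ≠ 1` for both `j ≠ i`, the walks given by `exists_connector` would lead from `r_j`
to `r_x` and back, allowing the two paths to exchange their tails. -/
lemma IsStableSystem.exists_lcsCount_eq_one {N : KPairNetwork 3} {P : Fin 3 → Fin 3 → List N.A}
    (hP : N.IsStableSystem P) {c d : Fin 3} (hcd : c ≠ d) {i : Fin 3}
    (hi : N.lcsCount P c d (P i c) = 1) : ∃ j, j ≠ i ∧ N.lcsCount P c d (P j d) = 1 := by
  by_contra! hall
  obtain ⟨j, hji⟩ := exists_ne i
  obtain ⟨x, hxi, hxj, m, hnm, hm, conn, hne, hsub, hfree, hwalk⟩ :=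
    hP.exists_connector hcd (Ne.symm hji) hi (hall j hji)
  obtain ⟨x', hx'i, hx'x, m', hnm', hm', conn', -, hsub', hfree', hwalk'⟩ :=
    hP.exists_connector hcd (Ne.symm hxi) hi (hall x hxi)
  obtain rfl : x' = j := by omega
  exact hP.not_free_crossing (Ne.symm hxj) hnm' hm' hnm hm hwalk hwalk' hne hfree hfree'
    ((hP.disjoint (Ne.symm hxj) d).mono hsub hsub')

end KPairNetwork

/-- Corollary 1 of the paper: in a stable 3-pair network,
if `ℓ(r_i) = 1` for some `i` then `ℓ(g_j) = 1` for some `j ≠ i`, and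
symmetrically with the roles of `r` and `g` exchanged. -/
theorem statement5 (N : KPairNetwork 3) (P : Fin 3 → Fin 3 → List N.A)
    (hP : N.IsStableSystem P) :
    (∀ i : Fin 3, N.lcsCount P 0 1 (P i 0) = 1 →
      ∃ j : Fin 3, j ≠ i ∧ N.lcsCount P 0 1 (P j 1) = 1) ∧
    (∀ i : Fin 3, N.lcsCount P 0 1 (P i 1) = 1 →
      ∃ j : Fin 3, j ≠ i ∧ N.lcsCount P 0 1 (P j 0) = 1) := by
  refine ⟨fun i hi => hP.exists_lcsCount_eq_one (by decide) hi, fun i hi => ?_⟩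
  rw [KPairNetwork.lcsCount_comm] at hi
  simpa only [KPairNetwork.lcsCount_comm P 1 0] using hP.exists_lcsCount_eq_one (by decide) hi
end

section
/- Every stable strongly reachable k-pair network is extra strongly reachable: if for each j the choice of k pairwise arc-disjoint paths P_{s_1,t_j},…,P_{s_k,t_j} is unique, then for each j any two of these paths share no vertex other than t_j. -/
open scoped BigOperators

namespace KPairNetwork

variable {k : ℕ} (N : KPairNetwork k)

/-- Along a path, arcs are pairwise distinct (acyclicity). -/
lemma nodup_of_chain {l : List N.A}
    (hc : l.Chain' (fun a b => N.head a = N.tail b)) : l.Nodup := by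
  obtain ⟨ord, hord⟩ := N.acyclic
  have hc' : l.Chain' (fun a b => ord (N.tail a) < ord (N.tail b)) := by
    refine hc.imp ?_
    intro a b hab
    have := hord a
    rw [hab] at this
    exact this
  have : IsTrans N.A (fun a b => ord (N.tail a) < ord (N.tail b)) :=
    ⟨fun _ _ _ h1 h2 => lt_trans h1 h2⟩
  have hp := List.isChain_iff_pairwise.mp hc'
  exact hp.imp (fun h => by rintro rfl; exact lt_irrefl _ h)

/-- Split a path at an interior vertex `v`. -/
lemma split_at {u w v : N.V} {l : List N.A} (h : N.IsPathFrom u w l)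
    (hv : v ∈ N.pathVerts l) (hvw : v ≠ w) :
    ∃ l1 l2, l = l1 ++ l2 ∧ l2 ≠ [] ∧ ∀ a ∈ l2.head?, N.tail a = v := by
  obtain ⟨a, ha, hcase⟩ := hv
  obtain ⟨l1, l2', rfl⟩ := List.append_of_mem ha
  rcases hcase with rfl | rfl
  · exact ⟨l1, a :: l2', rfl, by simp, by simp⟩
  · cases l2' with
    | nil =>
        exfalso
        apply hvw
        have := h.2.2.2 a
        rw [List.getLast?_concat] at this
        exact this rfl
    | cons b rest =>
        refine ⟨l1 ++ [a], b :: rest, by simp, by simp, ?_⟩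
        have hchain := h.2.1
        have hsuf : List.Chain' (fun a b => N.head a = N.tail b) (a :: b :: rest) :=
          hchain.suffix ⟨l1, rfl⟩
        have hab := (List.isChain_cons_cons.mp hsuf).1
        intro c hc
        simp at hc
        subst hc
        exact hab.symm

/-- Splicing two paths at a common interior vertex. -/
lemma splice {u u' w v : N.V} {l1 l2 m1 m2 : List N.A}
    (h : N.IsPathFrom u w (l1 ++ l2)) (h' : N.IsPathFrom u' w (m1 ++ m2))
    (hl2 : l2 ≠ []) (hm2 : m2 ≠ [])
    (hlv : ∀ a ∈ l2.head?, N.tail a = v) (hmv : ∀ a ∈ m2.head?, N.tail a = v) :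
    N.IsPathFrom u w (l1 ++ m2) := by
  obtain ⟨hne, hch, hhd, hlast⟩ := h
  obtain ⟨hne', hch', hhd', hlast'⟩ := h'
  obtain ⟨hchl1, hchl2, hjl⟩ := List.isChain_append.mp hch
  obtain ⟨hchm1, hchm2, hjm⟩ := List.isChain_append.mp hch'
  obtain ⟨a2, ha2⟩ : ∃ a, l2.head? = some a := by
    cases l2 with | nil => exact absurd rfl hl2 | cons x t => exact ⟨x, rfl⟩
  obtain ⟨b2, hb2⟩ : ∃ a, m2.head? = some a := by
    cases m2 with | nil => exact absurd rfl hm2 | cons x t => exact ⟨x, rfl⟩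
  refine ⟨by simp [hm2], ?_, ?_, ?_⟩
  · refine List.isChain_append.mpr ⟨hchl1, hchm2, ?_⟩
    intro x hx y hy
    have h1 : N.head x = N.tail a2 := hjl x hx a2 ha2
    have h2 : N.tail a2 = v := hlv a2 ha2
    have h3 : N.tail y = v := hmv y hy
    rw [h1, h2, h3]
  · cases l1 with
    | nil =>
        have huv : u = v := by
          have := hhd a2 (by simpa using ha2)
          rw [hlv a2 ha2] at this; exact this.symm
        intro a hha
        simp only [List.nil_append] at hha
        rw [hmv a hha, huv]
    | cons x t =>
        intro a hha
        simp only [List.cons_append, List.head?_cons, Option.mem_some_iff] at hha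
        subst hha
        exact hhd _ (by simp)
  · intro a hha
    apply hlast'
    obtain ⟨c, hc⟩ : ∃ c, m2.getLast? = some c :=
      Option.isSome_iff_exists.mp (List.getLast?_isSome.mpr hm2)
    rw [List.getLast?_append, hc] at hha ⊢
    exact hha

end KPairNetwork

/-- every stable strongly reachable `k`-pair network is
extra strongly reachable: the fixed stable path system is such that, for each
sink `j`, two distinct paths towards `t j` share no vertex other than `t j`. -/
theorem statement13 {k : ℕ} (N : KPairNetwork k) (P : Fin k → Fin k → List N.A)
    (hP : N.IsStableSystem P) :
    N.IsExtraStrongSystem P := by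
  obtain ⟨hstrong, huniq⟩ := hP
  refine ⟨hstrong, ?_⟩
  intro j i i' hne v hvi hvi'
  by_contra hvs
  obtain ⟨hpaths, hdisj⟩ := hstrong
  -- split the two paths at v
  obtain ⟨l1, l2, hl, hl2ne, hlv⟩ := N.split_at (hpaths i j) hvi hvs
  obtain ⟨m1, m2, hm, hm2ne, hmv⟩ := N.split_at (hpaths i' j) hvi' hvs
  have hpi : N.IsPathFrom (N.src i) (N.snk j) (l1 ++ l2) := hl ▸ hpaths i j
  have hpi' : N.IsPathFrom (N.src i') (N.snk j) (m1 ++ m2) := hm ▸ hpaths i' j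
  -- the swapped system
  set Q : Fin k → List N.A := fun i'' =>
    if i'' = i then l1 ++ m2 else if i'' = i' then m1 ++ l2 else P i'' j with hQ
  have hQi : Q i = l1 ++ m2 := by simp [hQ]
  have hQi' : Q i' = m1 ++ l2 := by simp [hQ, hne.symm]
  have hQo : ∀ i'', i'' ≠ i → i'' ≠ i' → Q i'' = P i'' j := by
    intro i'' h1 h2; simp [hQ, h1, h2]
  -- nodup facts
  have hnodl : (l1 ++ l2).Nodup := N.nodup_of_chain hpi.2.1
  have hnodm : (m1 ++ m2).Nodup := N.nodup_of_chain hpi'.2.1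
  have hdll : List.Disjoint l1 l2 := List.disjoint_of_nodup_append hnodl
  have hdmm : List.Disjoint m1 m2 := List.disjoint_of_nodup_append hnodm
  -- membership transfer
  have hmeml : ∀ a : N.A, a ∈ l1 ∨ a ∈ l2 → a ∈ P i j := by
    intro a ha; rw [hl]; exact List.mem_append.mpr ha
  have hmemm : ∀ a : N.A, a ∈ m1 ∨ a ∈ m2 → a ∈ P i' j := by
    intro a ha; rw [hm]; exact List.mem_append.mpr ha
  -- Q is a valid path system
  have hQpaths : ∀ i'', N.IsPathFrom (N.src i'') (N.snk j) (Q i'') := by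
    intro i''
    by_cases h1 : i'' = i
    · subst h1; rw [hQi]
      exact N.splice hpi hpi' hl2ne hm2ne hlv hmv
    by_cases h2 : i'' = i'
    · subst h2; rw [hQi']
      exact N.splice hpi' hpi hm2ne hl2ne hmv hlv
    · rw [hQo i'' h1 h2]; exact hpaths i'' j
  -- Q is arc-disjoint
  have hQdisj : ∀ i1 i2, i1 ≠ i2 → ∀ a : N.A, a ∈ Q i1 → a ∉ Q i2 := by
    intro i1 i2 h12 a ha1 ha2
    have key : ∀ b : N.A, ∀ i3, b ∈ Q i3 →
        (i3 ≠ i ∧ i3 ≠ i' ∧ b ∈ P i3 j) ∨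
        (i3 = i ∧ (b ∈ l1 ∨ b ∈ m2)) ∨ (i3 = i' ∧ (b ∈ m1 ∨ b ∈ l2)) := by
      intro b i3 hb
      by_cases h1 : i3 = i
      · subst h1; rw [hQi] at hb
        exact Or.inr (Or.inl ⟨rfl, List.mem_append.mp hb⟩)
      by_cases h2 : i3 = i'
      · subst h2; rw [hQi'] at hb
        exact Or.inr (Or.inr ⟨rfl, List.mem_append.mp hb⟩)
      · rw [hQo i3 h1 h2] at hb; exact Or.inl ⟨h1, h2, hb⟩
    have k1 := key a i1 ha1
    have k2 := key a i2 ha2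
    rcases k1 with ⟨hn1, hn1', k1⟩ | ⟨e1, k1⟩ | ⟨e1, k1⟩
    · rcases k2 with ⟨hn2, hn2', k2⟩ | ⟨e2, k2⟩ | ⟨e2, k2⟩
      · exact hdisj j i1 i2 h12 a k1 k2
      · rcases k2 with k2 | k2
        · exact hdisj j i1 i hn1 a k1 (hmeml a (Or.inl k2))
        · exact hdisj j i1 i' hn1' a k1 (hmemm a (Or.inr k2))
      · rcases k2 with k2 | k2
        · exact hdisj j i1 i' hn1' a k1 (hmemm a (Or.inl k2))
        · exact hdisj j i1 i hn1 a k1 (hmeml a (Or.inr k2))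
    · rcases k2 with ⟨hn2, hn2', k2⟩ | ⟨e2, k2⟩ | ⟨e2, k2⟩
      · rcases k1 with k1 | k1
        · exact hdisj j i2 i hn2 a k2 (hmeml a (Or.inl k1))
        · exact hdisj j i2 i' hn2' a k2 (hmemm a (Or.inr k1))
      · exact h12 (e1.trans e2.symm)
      · rcases k1 with k1 | k1 <;> rcases k2 with k2 | k2
        · exact hdisj j i i' hne a (hmeml a (Or.inl k1)) (hmemm a (Or.inl k2))
        · exact hdll k1 k2
        · exact hdmm k2 k1
        · exact hdisj j i' i hne.symm a (hmemm a (Or.inr k1)) (hmeml a (Or.inr k2))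
    · rcases k2 with ⟨hn2, hn2', k2⟩ | ⟨e2, k2⟩ | ⟨e2, k2⟩
      · rcases k1 with k1 | k1
        · exact hdisj j i2 i' hn2' a k2 (hmemm a (Or.inl k1))
        · exact hdisj j i2 i hn2 a k2 (hmeml a (Or.inr k1))
      · rcases k1 with k1 | k1 <;> rcases k2 with k2 | k2
        · exact hdisj j i' i hne.symm a (hmemm a (Or.inl k1)) (hmeml a (Or.inl k2))
        · exact hdmm k1 k2
        · exact hdll k2 k1
        · exact hdisj j i i' hne a (hmeml a (Or.inr k1)) (hmemm a (Or.inr k2))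
      · exact h12 (e1.trans e2.symm)
  -- stability forces Q i = P i j
  have heq := huniq j Q hQpaths hQdisj i
  rw [hQi, hl] at heq
  have hm2l2 : m2 = l2 := List.append_cancel_left heq
  obtain ⟨a2, ha2⟩ : ∃ a, a ∈ l2 := by
    cases l2 with | nil => exact absurd rfl hl2ne | cons x t => exact ⟨x, by simp⟩
  exact hdisj j i i' hne a2 (hmeml a2 (Or.inr ha2)) (hmemm a2 (Or.inr (hm2l2 ▸ ha2)))
end
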